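/- arXiv:2109.13799 — 3 statements merged into one kernel-verified Lean document; each statement's English description precedes it below -/
import Mathlib

section
/- Define the unnormalized vector q = (q1,q2,q3,q4) by q1 = (x4+(x3−x4)·y2)·(y4+(y3−y4)·x2) − x3·y3·(x2−x4)·(y2−y4), q2 = (x4+(x3−x4)·y4)·((1−y2)−(y1−y2)·x1) − x4·(1−y1)·(x1−x3)·(y2−y4), q3 = ((1−x2)−(x1−x2)·y1)·(y4+(y3−y4)·x4) − (1−x1)·y4·(x2−x4)·(y1−y3), q4 = ((1−x2)−(x1−x2)·y3)·((1−y2)−(y1−y2)·x3) − (1−x2)·(1−y2)·(x1−x3)·(y1−y3). Then M q = q, i.e., q is a fixed vector (eigenvector with eigenvalue 1) of the transition matrix M. -/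
def pdMatrix (x1 x2 x3 x4 y1 y2 y3 y4 : ℝ) : Matrix (Fin 4) (Fin 4) ℝ :=
  !![x1*y1,       x2*y3,       x3*y2,       x4*y4;
     x1*(1-y1),   x2*(1-y3),   x3*(1-y2),   x4*(1-y4);
     (1-x1)*y1,   (1-x2)*y3,   (1-x3)*y2,   (1-x4)*y4;
     (1-x1)*(1-y1), (1-x2)*(1-y3), (1-x3)*(1-y2), (1-x4)*(1-y4)]

/-- The unnormalized stationary vector `q` of Eq. (2) is a fixed vector of `M`. -/
theorem pd_stationary_vector (x1 x2 x3 x4 y1 y2 y3 y4 : ℝ) :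
    let q : Fin 4 → ℝ := ![
      (x4+(x3-x4)*y2)*(y4+(y3-y4)*x2) - x3*y3*(x2-x4)*(y2-y4),
      (x4+(x3-x4)*y4)*((1-y2)-(y1-y2)*x1) - x4*(1-y1)*(x1-x3)*(y2-y4),
      ((1-x2)-(x1-x2)*y1)*(y4+(y3-y4)*x4) - (1-x1)*y4*(x2-x4)*(y1-y3),
      ((1-x2)-(x1-x2)*y3)*((1-y2)-(y1-y2)*x3) - (1-x2)*(1-y2)*(x1-x3)*(y1-y3)]
    (pdMatrix x1 x2 x3 x4 y1 y2 y3 y4).mulVec q = q := by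
  intro q
  simp only [pdMatrix, q, Matrix.cons_mulVec, Matrix.empty_mulVec, Matrix.cons_dotProduct_cons,
    Matrix.dotProduct_of_isEmpty, Matrix.vecCons_inj, and_true]
  refine ⟨?_, ?_, ?_, ?_⟩ <;> ring
end

section
/- The function H(x,y) = −(P−S)·(log x + 2·log(1−y)) + (T−P)·x − (T−S)·y is a conserved quantity of the dynamics ẋ = x·((T−2P+S) − (T−S)·y)·g(x,y), ẏ = (1−y)·((T−P)·x − (P−S))·g(x,y), where g(x,y) = y·(1−x)/(1+y−x+y·x)²: along any solution (x(t), y(t)) with 0 < x(t) < 1 and 0 < y(t) < 1, d/dt H(x(t), y(t)) = 0. -/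
noncomputable def gdyn (x y : ℝ) : ℝ := y * (1 - x) / (1 + y - x + y*x)^2

/-- The conserved quantity `H` of the exploitation dynamics. -/
noncomputable def Hcons (T P S x y : ℝ) : ℝ :=
  -(P - S) * (Real.log x + 2 * Real.log (1 - y)) + (T - P) * x - (T - S) * y

/-! With `A = (T - 2P + S) - (T - S) y` and `B = (T - P) x - (P - S)` the dynamics read
`ẋ = x A g`, `ẏ = (1 - y) B g`, while the partial derivatives of `H` satisfy `x ∂ₓH = B` and
`(1 - y) ∂ᵧH = -A`. Hence `∇H · (ẋ, ẏ) = (B A - A B) g = 0`, whatever the common factor `g` is. -/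

theorem Hcons_hasDerivAt_comp {T P S x' y' t : ℝ} {x y : ℝ → ℝ}
    (hx : HasDerivAt x x' t) (hy : HasDerivAt y y' t) (hx0 : x t ≠ 0) (hy1 : 1 - y t ≠ 0) :
    HasDerivAt (fun s => Hcons T P S (x s) (y s))
      (((T - P) - (P - S) / x t) * x' + (2 * (P - S) / (1 - y t) - (T - S)) * y') t := by
  have hlogx : HasDerivAt (fun s => Real.log (x s)) (x' / x t) t := hx.log hx0
  have hlogy : HasDerivAt (fun s => Real.log (1 - y s)) (-y' / (1 - y t)) t :=
    (hy.const_sub 1).log hy1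
  unfold Hcons
  refine ((((hlogx.add (hlogy.const_mul 2)).const_mul (-(P - S))).add
    (hx.const_mul (T - P))).sub (hy.const_mul (T - S))).congr_deriv ?_
  ring

theorem Hcons_grad_mul_vectorField_eq_zero (T P S x y g : ℝ) (hx : x ≠ 0) (hy : 1 - y ≠ 0) :
    ((T - P) - (P - S) / x) * (x * ((T - 2*P + S) - (T - S) * y) * g)
      + (2 * (P - S) / (1 - y) - (T - S)) * ((1 - y) * ((T - P) * x - (P - S)) * g) = 0 := by
  field_simp
  ring

/-- `H` is conserved along any interior solution of the Lotka-Volterra-type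
learning dynamics. -/
theorem pd_conserved_quantity (T P S : ℝ) (x y : ℝ → ℝ)
    (hx : ∀ t, HasDerivAt x
      (x t * ((T - 2*P + S) - (T - S) * y t) * gdyn (x t) (y t)) t)
    (hy : ∀ t, HasDerivAt y
      ((1 - y t) * ((T - P) * x t - (P - S)) * gdyn (x t) (y t)) t)
    (hxI : ∀ t, 0 < x t ∧ x t < 1) (hyI : ∀ t, 0 < y t ∧ y t < 1) :
    ∀ t, HasDerivAt (fun s => Hcons T P S (x s) (y s)) 0 t := by
  intro t
  have hx0 : x t ≠ 0 := (hxI t).1.ne'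
  have hy1 : 1 - y t ≠ 0 := (sub_pos.2 (hyI t).2).ne'
  have hH := Hcons_hasDerivAt_comp (T := T) (P := P) (S := S) (hx t) (hy t) hx0 hy1
  rwa [Hcons_grad_mul_vectorField_eq_zero T P S _ _ _ hx0 hy1] at hH
end

section
/- At the interior fixed point (x3*, y4*) = ((P−S)/(T−P), (T−2P+S)/(T−S)) of the exploitation dynamics, the expected payoffs of the two players computed from the stationary distribution proportional to (0, y4*·x3*, y4*, 1−x3*) with payoff vectors (R,S,T,P) and (R,T,S,P) are u* = (T+S)/2 and v* = P, respectively. -/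
/-!
At the fixed point the mutual-defection weight `1 - x3` equals the combined weight
`y4 * x3 + y4` of the two exploitation states, both being `d = (T - 2P + S)/(T - P)`,
so the stationary distribution puts mass `1/2` on `DD`. The exploitation states contribute
`(T + S - P) * d` to player 1 and `P * d` to player 2, which gives the averages
`(T + S)/2` and `P`.
-/

section FixedPoint

variable {T P S : ℝ}

lemma one_sub_fixedPoint_x3 (hTP : T - P ≠ 0) :
    1 - (P - S) / (T - P) = (T - 2 * P + S) / (T - P) := by
  field_simp
  ring

lemma fixedPoint_exploitation_weight (hTP : T - P ≠ 0) (hTS : T - S ≠ 0) :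
    (T - 2 * P + S) / (T - S) * ((P - S) / (T - P)) + (T - 2 * P + S) / (T - S) =
      (T - 2 * P + S) / (T - P) := by
  field_simp
  ring

lemma fixedPoint_exploitation_payoff_fst (hTP : T - P ≠ 0) (hTS : T - S ≠ 0) :
    S * ((T - 2 * P + S) / (T - S) * ((P - S) / (T - P))) + T * ((T - 2 * P + S) / (T - S)) =
      (T + S - P) * ((T - 2 * P + S) / (T - P)) := by
  field_simp
  ring

lemma fixedPoint_exploitation_payoff_snd (hTP : T - P ≠ 0) (hTS : T - S ≠ 0) :
    T * ((T - 2 * P + S) / (T - S) * ((P - S) / (T - P))) + S * ((T - 2 * P + S) / (T - S)) =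
      P * ((T - 2 * P + S) / (T - P)) := by
  field_simp
  ring

end FixedPoint

lemma one_div_add_self_mul_add {a c d : ℝ} (hd : d ≠ 0) :
    1 / (d + d) * (a * d + c * d) = (a + c) / 2 := by
  field_simp
  ring

theorem pd_fixed_point_payoffs_general (T P S : ℝ)
    (hPS : P > S) (hsub : T + S > 2*P) :
    let x3 : ℝ := (P - S)/(T - P)
    let y4 : ℝ := (T - 2*P + S)/(T - S)
    let k : ℝ := 1 / (y4*x3 + y4 + (1 - x3))
    k * (S * (y4*x3) + T * y4 + P * (1 - x3)) = (T + S)/2 ∧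
    k * (T * (y4*x3) + S * y4 + P * (1 - x3)) = P := by
  intro x3 y4 k
  have hTP : T - P ≠ 0 := by linarith
  have hTS : T - S ≠ 0 := by linarith
  have hd : (T - 2 * P + S) / (T - P) ≠ 0 := div_ne_zero (by linarith) hTP
  have hk : k = 1 / ((T - 2 * P + S) / (T - P) + (T - 2 * P + S) / (T - P)) := by
    simp only [k, x3, y4, fixedPoint_exploitation_weight hTP hTS, one_sub_fixedPoint_x3 hTP]
  constructor
  · rw [hk, fixedPoint_exploitation_payoff_fst hTP hTS, one_sub_fixedPoint_x3 hTP,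
      one_div_add_self_mul_add hd]
    ring
  · rw [hk, fixedPoint_exploitation_payoff_snd hTP hTS, one_sub_fixedPoint_x3 hTP,
      one_div_add_self_mul_add hd]
    ring

/-- At the interior fixed point `(x3*, y4*) = ((P−S)/(T−P), (T−2P+S)/(T−S))`,
the normalized stationary payoffs of the two players are `(T+S)/2` and `P`. -/
theorem pd_fixed_point_payoffs (T R P S : ℝ)
    (hTR : T > R) (hRP : R > P) (hPS : P > S) (hsub : T + S > 2*P) :
    let x3 : ℝ := (P - S)/(T - P)
    let y4 : ℝ := (T - 2*P + S)/(T - S)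
    let k : ℝ := 1 / (y4*x3 + y4 + (1 - x3))
    k * (S * (y4*x3) + T * y4 + P * (1 - x3)) = (T + S)/2 ∧
    k * (T * (y4*x3) + S * y4 + P * (1 - x3)) = P :=
  pd_fixed_point_payoffs_general T P S hPS hsub
end
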